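/- Every finite composition of maps taken from {f₀, f₁} (equivalently, every element of the submonoid of self-maps of ℕ → Fin m generated by f₀ and f₁) is equal, as a self-map of ℕ → Fin m, to a normal-form transformation N(k; p_k, …, p₀) for some k ≥ 0 and some parameters p₀ ≥ 0, p_k ≥ 0, and p_i ≥ 1 for 1 ≤ i ≤ k-1. -/

import Mathlib

/-! Read a word as an `m`-adic integer, least significant digit first. Then `f₁` adds one, so
`f₁^q` adds `q`, while `f₀` clears the initial run of digits `m - 1` together with the digit
after it. A word produced by `f₀ ∘ f₁^{m^j p_j - 1} ∘ ⋯ ∘ f₀ ∘ f₁^{p₀}` vanishes at the positions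
`≤ j`, so `f₁^q` writes the low digits of `q` there. If `m^{j+1} ∣ q + 1` these are all `m - 1`,
and `f₀ ∘ f₁^q` is a new block of the normal form; otherwise `f₀` only clears digits of `q`, and
`f₀ ∘ f₁^q` acts on such words as `f₁^{q'}` with `q'` the number `q` with those digits cleared.
Hence normal forms are stable under left composition with `f₀` and `f₁`. -/

/- The automaton transformation `f₀` of the Mealy automaton `I_m` acting on
infinite words `u : ℕ → Fin m`: if `u` is constantly `m-1` it returns the
constant `0` sequence; otherwise, with `j` the least index where `u j ≠ m-1`,
it sets positions `≤ j` to `0` and keeps the rest. -/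
open Classical in
noncomputable def f0 (m : ℕ) (u : ℕ → Fin m) : ℕ → Fin m :=
  if h : ∃ j, (u j : ℕ) ≠ m - 1 then
    fun i => if i ≤ Nat.find h then ⟨0, (u 0).pos⟩ else u i
  else fun _ => ⟨0, (u 0).pos⟩

/- The automaton transformation `f₁` (the base-`m` odometer): if `u` is
constantly `m-1` it returns the constant `0` sequence; otherwise, with `j` the
least index where `u j ≠ m-1`, positions `< j` become `0`, position `j` is
incremented and the rest are kept. -/
open Classical in
noncomputable def f1 (m : ℕ) (u : ℕ → Fin m) : ℕ → Fin m :=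
  if h : ∃ j, (u j : ℕ) ≠ m - 1 then
    fun i =>
      if i < Nat.find h then ⟨0, (u 0).pos⟩
      else if hie : i = Nat.find h then
        ⟨(u i : ℕ) + 1, by
          have h2 := Nat.find_spec h
          rw [← hie] at h2
          have h3 := (u i).isLt
          have h4 := (u 0).pos
          omega⟩
      else u i
  else fun _ => ⟨0, (u 0).pos⟩

/- The inner part `B j = f₀ ∘ f₁^{m^j p_j - 1} ∘ ⋯ ∘ f₀ ∘ f₁^{m p₁ - 1} ∘ f₀ ∘ f₁^{p₀}`
of a normal form (with `B 0 = f₀ ∘ f₁^{p₀}`). -/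
noncomputable def nfB (m : ℕ) (p : ℕ → ℕ) : ℕ → (ℕ → Fin m) → ℕ → Fin m
  | 0 => f0 m ∘ (f1 m)^[p 0]
  | j + 1 => f0 m ∘ (f1 m)^[m ^ (j + 1) * p (j + 1) - 1] ∘ nfB m p j

/- The normal-form transformation
`N(k; p_k, …, p₀) = f₁^{p_k} ∘ f₀ ∘ f₁^{m^{k-1} p_{k-1} - 1} ∘ ⋯ ∘ f₀ ∘ f₁^{m p₁ - 1} ∘ f₀ ∘ f₁^{p₀}`,
with `N(0; p₀) = f₁^{p₀}`. -/
noncomputable def nf (m : ℕ) (k : ℕ) (p : ℕ → ℕ) : (ℕ → Fin m) → ℕ → Fin m :=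
  match k with
  | 0 => (f1 m)^[p 0]
  | k' + 1 => (f1 m)^[p (k' + 1)] ∘ nfB m p k'

namespace Nat

lemma add_div_eq_div_of_dvd {A r b c : ℕ} (hbc : b ∣ c) (hA : b ∣ A) (hr : r < b) :
    (A + r) / c = A / c := by
  obtain ⟨k, rfl⟩ := hbc
  obtain ⟨a, rfl⟩ := hA
  have hb : 0 < b := by omega
  rw [← Nat.div_div_eq_div_mul, ← Nat.div_div_eq_div_mul, Nat.mul_add_div hb,
    Nat.div_eq_of_lt hr, add_zero, Nat.mul_div_cancel_left _ hb]

lemma div_pow_mod_eq_zero_of_pow_succ_dvd {m x i : ℕ} (hm : 0 < m) (h : m ^ (i + 1) ∣ x) :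
    x / m ^ i % m = 0 := by
  obtain ⟨c, rfl⟩ := h
  rw [pow_succ, mul_assoc, Nat.mul_div_cancel_left _ (pow_pos hm i), Nat.mul_mod_right]

lemma mod_add_one_eq_of_dvd_add_one {M e : ℕ} (h : M ∣ e + 1) : e % M + 1 = M := by
  obtain ⟨c, hc⟩ := h
  obtain ⟨c, rfl⟩ : ∃ c', c = c' + 1 := ⟨c - 1, by rcases c with _ | c <;> simp_all⟩
  have hM : 0 < M := Nat.pos_of_ne_zero (by rintro rfl; simp at hc)
  have he : e = M * c + (M - 1) := by rw [mul_add, mul_one] at hc; omega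
  rw [he, Nat.mul_add_mod, Nat.mod_eq_of_lt (by omega)]
  omega

end Nat

section

variable {m : ℕ}

def prefixValue (u : ℕ → Fin m) (n : ℕ) : ℕ := ∑ i ∈ Finset.range n, (u i : ℕ) * m ^ i

lemma prefixValue_succ (u : ℕ → Fin m) (n : ℕ) :
    prefixValue u (n + 1) = prefixValue u n + u n * m ^ n :=
  Finset.sum_range_succ _ _

lemma prefixValue_lt (u : ℕ → Fin m) (n : ℕ) : prefixValue u n < m ^ n := by
  induction n with
  | zero => simp [prefixValue]
  | succ n ih =>
    have hu : (u n : ℕ) + 1 ≤ m := (u n).isLt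
    rw [prefixValue_succ, pow_succ]
    nlinarith [Nat.mul_le_mul_left (m ^ n) hu]

lemma prefixValue_add_one_eq_pow_iff (u : ℕ → Fin m) (n : ℕ) :
    prefixValue u n + 1 = m ^ n ↔ ∀ i < n, (u i : ℕ) = m - 1 := by
  induction n with
  | zero => simp [prefixValue]
  | succ n ih =>
    have hpos : 0 < m ^ n := pow_pos (u 0).pos n
    have hlt := prefixValue_lt u n
    have hu : (u n : ℕ) + 1 ≤ m := (u n).isLt
    rw [prefixValue_succ, pow_succ, Nat.forall_lt_succ_right, ← ih]
    constructor
    · intro h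
      have hun : (u n : ℕ) + 1 = m := by
        refine Nat.eq_of_mul_eq_mul_left hpos (le_antisymm (by nlinarith) ?_)
        nlinarith
      refine ⟨?_, by omega⟩
      have : m ^ n * ((u n : ℕ) + 1) = m ^ n * m := by rw [hun]
      linarith
    · rintro ⟨h, hun⟩
      have hm : m - 1 + 1 = m := Nat.sub_add_cancel (u 0).pos
      calc prefixValue u n + (u n : ℕ) * m ^ n + 1
          = (prefixValue u n + 1) + (m - 1) * m ^ n := by rw [hun]; ring
        _ = m ^ n * (m - 1 + 1) := by rw [h]; ring
        _ = m ^ n * m := by rw [hm]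

lemma prefixValue_eq_zero_of_le {w : ℕ → Fin m} {n i : ℕ} (hw : ∀ j < n, (w j : ℕ) = 0)
    (hi : i ≤ n) : prefixValue w i = 0 :=
  Finset.sum_eq_zero fun j hj => by rw [hw j (by simp at hj; omega), zero_mul]

lemma pow_dvd_prefixValue {w : ℕ → Fin m} {n : ℕ} (hw : ∀ j < n, (w j : ℕ) = 0) (i : ℕ) :
    m ^ n ∣ prefixValue w i := by
  refine Finset.dvd_sum fun j _ => ?_
  rcases lt_or_ge j n with hj | hj
  · simp [hw j hj]
  · exact Dvd.dvd.mul_left (pow_dvd_pow m hj) _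

/-- The sum `q + u` in the `m`-adic integers, digits listed least significant first. -/
def addNat (q : ℕ) (u : ℕ → Fin m) : ℕ → Fin m :=
  fun i => ⟨(q + prefixValue u (i + 1)) / m ^ i % m, Nat.mod_lt _ (u 0).pos⟩

lemma val_addNat_apply (q : ℕ) (u : ℕ → Fin m) (i : ℕ) :
    (addNat q u i : ℕ) = ((u i : ℕ) + (q + prefixValue u i) / m ^ i) % m := by
  simp only [addNat, prefixValue_succ, ← add_assoc]
  rw [Nat.add_mul_div_right _ _ (pow_pos (u 0).pos i), add_comm]

lemma val_addNat_apply_of_lt {q n i : ℕ} {w : ℕ → Fin m} (hw : ∀ j < n, (w j : ℕ) = 0)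
    (hi : i < n) : (addNat q w i : ℕ) = q / m ^ i % m := by
  rw [val_addNat_apply, hw i hi, prefixValue_eq_zero_of_le hw hi.le, zero_add, add_zero]

lemma addNat_zero (u : ℕ → Fin m) : addNat 0 u = u := by
  funext i
  apply Fin.ext
  rw [val_addNat_apply, zero_add, Nat.div_eq_of_lt (prefixValue_lt u i), add_zero,
    Nat.mod_eq_of_lt (u i).isLt]

lemma prefixValue_addNat (q : ℕ) (u : ℕ → Fin m) (n : ℕ) :
    prefixValue (addNat q u) n = (q + prefixValue u n) % m ^ n := by
  induction n with
  | zero => simp [prefixValue, Nat.mod_one]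
  | succ n ih =>
    rw [prefixValue_succ (addNat q u), ih, pow_succ, Nat.mod_mul, mul_comm]
    congr 1
    rw [prefixValue_succ, ← add_assoc, Nat.add_mul_mod_self_right]

lemma addNat_addNat (a b : ℕ) (u : ℕ → Fin m) : addNat a (addNat b u) = addNat (a + b) u := by
  funext i
  apply Fin.ext
  simp only [addNat, prefixValue_addNat]
  set X := b + prefixValue u (i + 1)
  have hX : a + b + prefixValue u (i + 1) =
      a + X % m ^ (i + 1) + m ^ i * (m * (X / m ^ (i + 1))) := by
    have := Nat.mod_add_div X (m ^ (i + 1))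
    rw [pow_succ] at this ⊢
    rw [← mul_assoc]
    omega
  rw [hX, Nat.add_mul_div_left _ _ (pow_pos (u 0).pos i), Nat.add_mul_mod_self_left]

lemma one_add_prefixValue_div (u : ℕ → Fin m) (i : ℕ) :
    (1 + prefixValue u i) / m ^ i = if ∀ j < i, (u j : ℕ) = m - 1 then 1 else 0 := by
  have hlt := prefixValue_lt u i
  by_cases h : ∀ j < i, (u j : ℕ) = m - 1
  · rw [if_pos h, add_comm, (prefixValue_add_one_eq_pow_iff u i).2 h,
      Nat.div_self (pow_pos (u 0).pos i)]
  · rw [if_neg h, ← prefixValue_add_one_eq_pow_iff] at *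
    exact Nat.div_eq_of_lt (by omega)

lemma f1_eq_addNat_one (u : ℕ → Fin m) : f1 m u = addNat 1 u := by
  funext i
  apply Fin.ext
  rw [val_addNat_apply, one_add_prefixValue_div]
  by_cases h : ∃ j, (u j : ℕ) ≠ m - 1
  · have hv : (u (Nat.find h) : ℕ) ≠ m - 1 := Nat.find_spec h
    have hbelow : ∀ j < Nat.find h, (u j : ℕ) = m - 1 := fun j hj => not_not.1 (Nat.find_min h hj)
    have hu := (u i).isLt
    simp only [f1, dif_pos h]
    rcases lt_trichotomy i (Nat.find h) with hi | rfl | hi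
    · rw [if_pos hi, if_pos fun j hj => hbelow j (hj.trans hi), hbelow i hi,
        Nat.sub_add_cancel (u 0).pos, Nat.mod_self]
    · rw [if_neg (lt_irrefl _), dif_pos rfl, if_pos hbelow, Nat.mod_eq_of_lt (by omega)]
    · rw [if_neg (by omega), dif_neg (by omega), if_neg fun hall => hv (hall _ hi), add_zero,
        Nat.mod_eq_of_lt hu]
  · push Not at h
    rw [f1, dif_neg (by simpa using h), if_pos fun j _ => h j, h i,
      Nat.sub_add_cancel (u 0).pos, Nat.mod_self]

lemma iterate_f1 (q : ℕ) : (f1 m)^[q] = addNat q := by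
  induction q with
  | zero => funext u; exact (addNat_zero u).symm
  | succ q ih =>
    funext u
    rw [Function.iterate_succ_apply', ih, f1_eq_addNat_one, addNat_addNat, add_comm]

lemma val_f0_apply_of_le {u : ℕ → Fin m} {n i : ℕ} (h : ∀ j < n, (u j : ℕ) = m - 1)
    (hi : i ≤ n) : (f0 m u i : ℕ) = 0 := by
  unfold f0
  by_cases hex : ∃ j, (u j : ℕ) ≠ m - 1
  · have hn : n ≤ Nat.find hex := not_lt.1 fun hlt => Nat.find_spec hex (h _ hlt)
    simp only [dif_pos hex, if_pos (hi.trans hn)]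
  · rw [dif_neg hex]

lemma val_f0_apply {u : ℕ → Fin m} {v : ℕ} (hv : (u v : ℕ) ≠ m - 1)
    (hbelow : ∀ j < v, (u j : ℕ) = m - 1) (i : ℕ) :
    (f0 m u i : ℕ) = if i ≤ v then 0 else (u i : ℕ) := by
  have hex : ∃ j, (u j : ℕ) ≠ m - 1 := ⟨v, hv⟩
  have hfind : Nat.find hex = v :=
    (Nat.find_eq_iff hex).2 ⟨hv, fun j hj => not_not.2 (hbelow j hj)⟩
  rw [f0, dif_pos hex, hfind]
  split_ifs <;> rfl

lemma exists_f0_addNat (hm : 2 ≤ m) {n q : ℕ} (hq : ¬ m ^ n ∣ q + 1) :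
    ∃ q', ∀ w : ℕ → Fin m, (∀ j < n, (w j : ℕ) = 0) → f0 m (addNat q w) = addNat q' w := by
  have hm0 : 0 < m := by omega
  have hdigit : ∃ i, q / m ^ i % m ≠ m - 1 :=
    ⟨q, by rw [Nat.div_eq_of_lt (Nat.lt_pow_self (by omega)), Nat.zero_mod]; omega⟩
  set v := Nat.find hdigit
  have hbelow : ∀ j < v, q / m ^ j % m = m - 1 := fun j hj => not_not.1 (Nat.find_min hdigit hj)
  refine ⟨m ^ (v + 1) * (q / m ^ (v + 1)), fun w hw => ?_⟩
  have hvn : v < n := by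
    by_contra! hnv
    have hall : ∀ i < n, (addNat q w i : ℕ) = m - 1 := fun i hi => by
      rw [val_addNat_apply_of_lt hw hi]; exact hbelow i (by omega)
    have hmod := (prefixValue_add_one_eq_pow_iff _ n).2 hall
    rw [prefixValue_addNat, prefixValue_eq_zero_of_le hw le_rfl, add_zero] at hmod
    refine hq ⟨q / m ^ n + 1, ?_⟩
    have := Nat.div_add_mod q (m ^ n)
    rw [mul_add, mul_one]
    omega
  funext i
  apply Fin.ext
  rw [val_f0_apply (v := v) (by rw [val_addNat_apply_of_lt hw hvn]; exact Nat.find_spec hdigit)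
    (fun j hj => by rw [val_addNat_apply_of_lt hw (hj.trans hvn)]; exact hbelow j hj)]
  split_ifs with hiv
  · rw [val_addNat_apply_of_lt hw (by omega),
      Nat.div_pow_mod_eq_zero_of_pow_succ_dvd hm0 ((pow_dvd_pow m (by omega)).mul_right _)]
  · rw [val_addNat_apply, val_addNat_apply]
    congr 2
    conv_lhs => rw [← Nat.div_add_mod q (m ^ (v + 1)), add_right_comm]
    exact Nat.add_div_eq_div_of_dvd (pow_dvd_pow m (by omega))
      (dvd_add (dvd_mul_right _ _) ((pow_dvd_pow m hvn).trans (pow_dvd_prefixValue hw i)))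
      (Nat.mod_lt _ (pow_pos hm0 _))

lemma nfB_update_of_lt {p : ℕ → ℕ} {i j x : ℕ} (h : j < i) :
    nfB m (Function.update p i x) j = nfB m p j := by
  induction j with
  | zero => simp [nfB, Function.update_of_ne h.ne]
  | succ j ih => simp [nfB, Function.update_of_ne h.ne, ih (by omega)]

lemma nf_succ_update_self (k x : ℕ) (p : ℕ → ℕ) :
    nf m (k + 1) (Function.update p (k + 1) x) = (f1 m)^[x] ∘ nfB m p k := by
  simp [nf, nfB_update_of_lt (lt_add_one k)]

lemma val_nfB_apply_of_lt {p : ℕ → ℕ} {j : ℕ} (hp : ∀ i, 1 ≤ i → i ≤ j → 1 ≤ p i)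
    (u : ℕ → Fin m) : ∀ i < j + 1, (nfB m p j u i : ℕ) = 0 := by
  induction j with
  | zero => exact fun i hi => val_f0_apply_of_le (n := 0) (by simp) (by omega)
  | succ j ih =>
    intro i hi
    have hw := ih fun i h1 h2 => hp i h1 (by omega)
    have hpos : 0 < m ^ (j + 1) * p (j + 1) :=
      Nat.mul_pos (pow_pos (u 0).pos _) (hp (j + 1) (by omega) le_rfl)
    have hdvd : m ^ (j + 1) ∣ m ^ (j + 1) * p (j + 1) - 1 + 1 := by
      rw [Nat.sub_add_cancel hpos]; exact dvd_mul_right _ _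
    show (f0 m ((f1 m)^[_] (nfB m p j u)) i : ℕ) = 0
    rw [iterate_f1]
    refine val_f0_apply_of_le ?_ (Nat.lt_succ_iff.1 hi)
    rw [← prefixValue_add_one_eq_pow_iff, prefixValue_addNat,
      prefixValue_eq_zero_of_le hw le_rfl, add_zero]
    exact Nat.mod_add_one_eq_of_dvd_add_one hdvd

end

def IsNormalForm (m : ℕ) (g : (ℕ → Fin m) → ℕ → Fin m) : Prop :=
  ∃ (k : ℕ) (p : ℕ → ℕ), (∀ i, 1 ≤ i → i ≤ k - 1 → 1 ≤ p i) ∧ g = nf m k p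

namespace IsNormalForm

variable {m : ℕ} {g : (ℕ → Fin m) → ℕ → Fin m}

lemma id : IsNormalForm m id := ⟨0, fun _ => 0, by omega, rfl⟩

lemma f1_comp (hg : IsNormalForm m g) : IsNormalForm m (f1 m ∘ g) := by
  obtain ⟨k, p, hp, rfl⟩ := hg
  refine ⟨k, Function.update p k (p k + 1),
    fun i h1 h2 => by rw [Function.update_of_ne (by omega)]; exact hp i h1 h2, ?_⟩
  rcases k with _ | k
  · show f1 m ∘ (f1 m)^[p 0] = (f1 m)^[Function.update p 0 (p 0 + 1) 0]
    rw [Function.update_self, Function.iterate_succ']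
  · rw [nf_succ_update_self, Function.iterate_succ', Function.comp_assoc]
    rfl

lemma f0_comp (hm : 2 ≤ m) (hg : IsNormalForm m g) : IsNormalForm m (f0 m ∘ g) := by
  obtain ⟨k, p, hp, rfl⟩ := hg
  rcases k with _ | k
  · exact ⟨1, Function.update p 1 0, by omega, by rw [nf_succ_update_self]; rfl⟩
  by_cases hdvd : m ^ (k + 1) ∣ p (k + 1) + 1
  · -- `f₀ ∘ f₁^{p_{k+1}}` closes a new block `f₀ ∘ f₁^{m^{k+1} c - 1}`
    set c := (p (k + 1) + 1) / m ^ (k + 1)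
    have hc : m ^ (k + 1) * c = p (k + 1) + 1 := Nat.mul_div_cancel' hdvd
    refine ⟨k + 2, Function.update (Function.update p (k + 1) c) (k + 2) 0, ?_, ?_⟩
    · intro i h1 h2
      rw [Function.update_of_ne (by omega)]
      rcases eq_or_ne i (k + 1) with rfl | hi
      · rw [Function.update_self]
        exact Nat.pos_of_ne_zero fun h0 => by simp [h0] at hc
      · rw [Function.update_of_ne hi]; exact hp i h1 (by omega)
    · rw [nf_succ_update_self, Function.iterate_zero, Function.id_comp]
      simp only [nfB, Function.update_self, hc, Nat.add_sub_cancel,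
        nfB_update_of_lt (lt_add_one k)]
      rfl
  · obtain ⟨q', hq'⟩ := exists_f0_addNat hm hdvd
    refine ⟨k + 1, Function.update p (k + 1) q',
      fun i h1 h2 => by rw [Function.update_of_ne (by omega)]; exact hp i h1 h2, ?_⟩
    rw [nf_succ_update_self]
    funext u
    simp only [nf, Function.comp_apply, iterate_f1]
    exact hq' _ (val_nfB_apply_of_lt (fun i h1 h2 => hp i h1 (by omega)) u)

end IsNormalForm

/-- Every element of the submonoid of self-maps of `ℕ → Fin m` generated by
`f₀` and `f₁` equals a normal-form transformation `N(k; p_k, …, p₀)` with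
`p_i ≥ 1` for `1 ≤ i ≤ k-1`. -/
theorem exists_normal_form (m : ℕ) (hm : 2 ≤ m)
    (s : Function.End (ℕ → Fin m))
    (hs : s ∈ Submonoid.closure ({f0 m, f1 m} : Set (Function.End (ℕ → Fin m)))) :
    ∃ (k : ℕ) (p : ℕ → ℕ), (∀ i, 1 ≤ i → i ≤ k - 1 → 1 ≤ p i) ∧
      (s : (ℕ → Fin m) → ℕ → Fin m) = nf m k p := by
  induction hs using Submonoid.closure_induction_left with
  | one => exact IsNormalForm.id
  | mul_left x hx y _ ih =>
    rcases hx with rfl | rfl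
    · exact IsNormalForm.f0_comp hm ih
    · exact IsNormalForm.f1_comp ih
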